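/- Let 0 < ε < 1/2 and let c : ℝ → ℝ be continuous with support contained in the interval [(1−ε)², (1+ε)²]. Define C : ℝ → ℝ by C(u) := −∫_u^∞ c(v) dv. Then ∫_ℝ x · c(x²) · C((x−1)²) dx = −(1/2) (∫_ℝ c(u) du)². In particular, this integral is nonzero whenever ∫_ℝ c ≠ 0. -/
import Mathlib


open MeasureTheory

/-- The final integral computation of Section 4: for continuous `c` supported in
`[(1−ε)², (1+ε)²]` with `0 < ε < 1/2` and `C(u) = −∫_u^∞ c`, one has
`∫ x·c(x²)·C((x−1)²) dx = −(1/2)(∫ c)²`; in particular the integral is nonzero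
whenever `∫ c ≠ 0`. -/
theorem roberts_integral_computation
    (ε : ℝ) (hε0 : 0 < ε) (hε : ε < 1/2)
    (c : ℝ → ℝ) (hc : Continuous c)
    (hsupp : Function.support c ⊆ Set.Icc ((1 - ε)^2) ((1 + ε)^2))
    (C : ℝ → ℝ) (hC : ∀ u : ℝ, C u = -(∫ v in Set.Ioi u, c v)) :
    (∫ x : ℝ, x * c (x^2) * C ((x - 1)^2)) = -(1/2) * (∫ u : ℝ, c u)^2 ∧
    ((∫ u : ℝ, c u) ≠ 0 → (∫ x : ℝ, x * c (x^2) * C ((x - 1)^2)) ≠ 0) := by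
  set T := ∫ u : ℝ, c u with hT
  have hczero : ∀ u : ℝ, u < (1-ε)^2 ∨ (1+ε)^2 < u → c u = 0 := by
    intro u hu
    by_contra h
    have hmem := hsupp (Function.mem_support.mpr h)
    rcases hu with h3 | h3
    · exact absurd hmem.1 (by linarith)
    · exact absurd hmem.2 (by linarith)
  have hCfull : ∀ u : ℝ, u < (1-ε)^2 → C u = -T := by
    intro u hu
    rw [hC]
    congr 1
    rw [hT]
    apply MeasureTheory.setIntegral_eq_integral_of_forall_compl_eq_zero
    intro v hv
    simp only [Set.mem_Ioi, not_lt] at hv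
    exact hczero v (Or.inl (lt_of_le_of_lt hv hu))
  have hCzero : ∀ u : ℝ, (1+ε)^2 < u → C u = 0 := by
    intro u hu
    rw [hC]
    have hz : ∀ v ∈ Set.Ioi u, c v = 0 := fun v hv =>
      hczero v (Or.inr (lt_trans hu hv))
    rw [MeasureTheory.setIntegral_eq_zero_of_forall_eq_zero hz, neg_zero]
  have key : (∫ x : ℝ, x * c (x^2) * C ((x - 1)^2)) = -T * ((1/2) * T) := by
    have h1 : (∫ x : ℝ, x * c (x^2) * C ((x - 1)^2))
        = ∫ x in Set.Ioc (1/4 : ℝ) 3, x * c (x^2) * C ((x - 1)^2) := by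
      symm
      apply MeasureTheory.setIntegral_eq_integral_of_forall_compl_eq_zero
      intro x hx
      by_cases hcx : c (x^2) = 0
      · simp [hcx]
      · have hmem := hsupp (Function.mem_support.mpr hcx)
        have h1 := hmem.1
        have h2 := hmem.2
        simp only [Set.mem_Ioc, not_and_or, not_lt, not_le] at hx
        have hxle : x ≤ 1/4 := by
          rcases hx with h | h
          · exact h
          · nlinarith [sq_nonneg ε]
        have hxneg : x ≤ -(1-ε) := by nlinarith [sq_nonneg (ε - 1/2)]
        have : (1+ε)^2 < (x-1)^2 := by nlinarith
        rw [hCzero _ this, mul_zero]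
    have h2 : (∫ x in Set.Ioc (1/4 : ℝ) 3, x * c (x^2) * C ((x - 1)^2))
        = ∫ x in Set.Ioc (1/4 : ℝ) 3, -T * (x * c (x^2)) := by
      apply MeasureTheory.setIntegral_congr_fun measurableSet_Ioc
      intro x hx
      by_cases hcx : c (x^2) = 0
      · simp [hcx]
      · have hmem := hsupp (Function.mem_support.mpr hcx)
        have hx1 : 1 - ε ≤ x := by nlinarith [hmem.1, hx.1]
        have hx2 : x ≤ 1 + ε := by nlinarith [hmem.2, hx.1]
        have hlt : (x-1)^2 < (1-ε)^2 := by
          nlinarith [mul_nonneg (sub_nonneg.mpr hx1) (sub_nonneg.mpr hx2)]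
        show x * c (x^2) * C ((x-1)^2) = -T * (x * c (x^2))
        rw [hCfull _ hlt]
        ring
    have h3 : (∫ x in Set.Ioc (1/4 : ℝ) 3, -T * (x * c (x^2)))
        = -T * ∫ x in Set.Ioc (1/4 : ℝ) 3, x * c (x^2) :=
      MeasureTheory.integral_const_mul _ _
    have h4 : (∫ x in Set.Ioc (1/4 : ℝ) 3, x * c (x^2))
        = ∫ x in (1/4 : ℝ)..3, x * c (x^2) :=
      (intervalIntegral.integral_of_le (by norm_num)).symm
    have hsub : (∫ x in (1/4:ℝ)..3, (2*x) * c (x^2))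
        = ∫ u in (1/16:ℝ)..9, c u := by
      have hder : ∀ x ∈ Set.uIcc (1/4:ℝ) 3,
          HasDerivAt (fun y : ℝ => y^2) (2*x) x := by
        intro x _
        simpa using hasDerivAt_pow 2 x
      have := intervalIntegral.integral_comp_smul_deriv hder
        ((continuous_const.mul continuous_id').continuousOn) hc
      norm_num [smul_eq_mul] at this
      convert this using 2
    have h5 : (∫ x in (1/4:ℝ)..3, x * c (x^2))
        = (1/2) * ∫ x in (1/4:ℝ)..3, (2*x) * c (x^2) := by
      rw [← intervalIntegral.integral_const_mul]
      congr 1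
      ext x
      ring
    have h7 : (∫ u in (1/16:ℝ)..9, c u) = T := by
      rw [intervalIntegral.integral_of_le (by norm_num), hT]
      apply MeasureTheory.setIntegral_eq_integral_of_forall_compl_eq_zero
      intro u hu
      by_contra h
      have hmem := hsupp (Function.mem_support.mpr h)
      simp only [Set.mem_Ioc, not_and_or, not_lt, not_le] at hu
      rcases hu with h1 | h1
      · nlinarith [hmem.1, sq_nonneg (ε - 1/2)]
      · nlinarith [hmem.2, sq_nonneg ε]
    rw [h1, h2, h3, h4, h5, hsub, h7]
  constructor
  · rw [key]; ring
  · intro hTne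
    rw [key]
    intro h
    apply hTne
    have h2 : T^2 = 0 := by nlinarith
    exact pow_eq_zero_iff two_ne_zero |>.mp h2
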